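/- Let (r_k)_{k∈ℕ} be a sequence with r_1 = 1, Σ_{k=1}^∞ r_k < ∞, and such that r_i = 0 implies r_j = 0 for all j ≥ i. Suppose there is a constant c_0 so that Σ_{k=M}^∞ r_k ≤ c_0/M for all integers M ≥ 2. Fix d ≥ 1 and a discrete probability measure μ = Σ_{i=1}^∞ α_i δ_{y_i} on [0,1]^d (α_i ≥ 0, Σ_i α_i = 1) whose weights satisfy α_k ≤ r_k α_1 for all k. Let g : [1,∞) → [0,∞) be a continuous strictly decreasing function with Σ_{i=M}^∞ r_i ≤ g(M) for all integers M ≥ 2 and g(s) ≤ c_0/s for all s ∈ [1,∞). Then for every integer N ≥ 2 and every t ∈ [1,∞) with g(t) = 1/(N α_1), there exist points x_1, …, x_N ∈ [0,1]^d such that the empirical measure ν_N satisfies ρ(μ; ν_N) < (6c_0 + 3) · t / N. -/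

import Mathlib

/-!
Round the weights: put `⌊N α_i⌋` of the points on `y_i` for `1 ≤ i ≤ K` and all remaining points
on the heaviest atom `y_0`. The empirical measure is then the discrete measure with weights
`n_i / N`, so its total variation distance to `μ` is at most the `ℓ¹` distance of the weights.
Since `n_i / N ≤ α_i` off the atom `y_0` and both weight vectors have mass one, that distance is
twice the mass lost off `y_0`: less than `1/N` per rounded atom plus the whole tail `∑_{i>K} α_i`.
Taking `K + 1 ≤ t ≤ K + 2`, the decay `α_i ≤ r_i α_0` and the gauge bound this tail by
`α_0 g(t) = 1/N`, whence `ρ(μ; ν_N) ≤ 2t/N`.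
-/

open MeasureTheory Set
open scoped ENNReal

/-- The empirical measure `ν_N = (1/N) ∑_{i=1}^N δ_{x_i}` associated to the points
`x 0, …, x (N-1)` in `[0,1]^d ⊆ ℝ^d`. -/
noncomputable def empMeasure (d N : ℕ) (x : Fin N → (Fin d → ℝ)) : Measure (Fin d → ℝ) :=
  (N : ℝ≥0∞)⁻¹ • ∑ i : Fin N, Measure.dirac (x i)

/-- The discrete measure `μ = ∑_{i=1}^∞ α_i δ_{y_i}`. -/
noncomputable def discreteMeasure (d : ℕ) (α : ℕ → ℝ) (y : ℕ → (Fin d → ℝ)) :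
    Measure (Fin d → ℝ) :=
  Measure.sum fun i => ENNReal.ofReal (α i) • Measure.dirac (y i)

/-- The total variation distance `ρ(μ;ν) = sup_{A Borel} |μ(A) − ν(A)|`. -/
noncomputable def totalVar {d : ℕ} (μ ν : Measure (Fin d → ℝ)) : ℝ :=
  ⨆ A : {S : Set (Fin d → ℝ) // MeasurableSet S}, |(μ ↑A).toReal - (ν ↑A).toReal|

lemma Summable.of_tsum_ne_zero {ι M : Type*} [AddCommMonoid M] [TopologicalSpace M] {f : ι → M}
    (h : ∑' i, f i ≠ 0) : Summable f := by
  by_contra hf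
  exact h (tsum_eq_zero_of_not_summable hf)

lemma exists_fin_map_sum_eq_sum_nsmul {ι M : Type*} [AddCommMonoid M] (s : Finset ι)
    (n : ι → ℕ) {N : ℕ} (hN : ∑ i ∈ s, n i = N) :
    ∃ k : Fin N → ι, ∀ F : ι → M, ∑ j, F (k j) = ∑ i ∈ s, n i • F i := by
  let e : (Σ i : s, Fin (n i)) ≃ Fin N :=
    Fintype.equivFinOfCardEq (by simp [Fintype.card_sigma, ← hN, Finset.sum_attach])
  refine ⟨fun j => (e.symm j).1, fun F => ?_⟩
  rw [e.symm.sum_comp (fun p => F p.1), Fintype.sum_sigma, ← Finset.sum_coe_sort s]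
  simp

lemma discreteMeasure_apply_toReal {d : ℕ} {α : ℕ → ℝ} (hα : ∀ i, 0 ≤ α i) (hs : Summable α)
    (y : ℕ → Fin d → ℝ) {A : Set (Fin d → ℝ)} (hA : MeasurableSet A) :
    (discreteMeasure d α y A).toReal = ∑' i, (y ⁻¹' A).indicator α i := by
  have hind : ∀ i, 0 ≤ (y ⁻¹' A).indicator α i := Set.indicator_nonneg fun i _ => hα i
  have hterm : ∀ i, ENNReal.ofReal (α i) * Measure.dirac (y i) A
      = ENNReal.ofReal ((y ⁻¹' A).indicator α i) := by
    intro i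
    by_cases h : y i ∈ A <;> simp [Measure.dirac_apply' _ hA, h]
  rw [discreteMeasure, Measure.sum_apply _ hA]
  simp only [Measure.smul_apply, smul_eq_mul, hterm]
  rw [← ENNReal.ofReal_tsum_of_nonneg hind (hs.indicator _),
    ENNReal.toReal_ofReal (tsum_nonneg hind)]

lemma totalVar_discreteMeasure_le_tsum_abs_sub {d : ℕ} {α β : ℕ → ℝ} (hα : ∀ i, 0 ≤ α i)
    (hβ : ∀ i, 0 ≤ β i) (hαs : Summable α) (hβs : Summable β) (y : ℕ → Fin d → ℝ) :
    totalVar (discreteMeasure d α y) (discreteMeasure d β y) ≤ ∑' i, |α i - β i| := by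
  have hs : Summable fun i => ‖α i - β i‖ := (hαs.sub hβs).norm
  refine Real.iSup_le (fun ⟨A, hA⟩ => ?_) (tsum_nonneg fun i => abs_nonneg _)
  have hle : ∀ i, ‖(y ⁻¹' A).indicator (fun i => α i - β i) i‖ ≤ ‖α i - β i‖ :=
    fun i => norm_indicator_le_norm_self _ i
  have hs' := hs.of_nonneg_of_le (fun i => norm_nonneg _) hle
  rw [discreteMeasure_apply_toReal hα hαs y hA, discreteMeasure_apply_toReal hβ hβs y hA,
    ← (hαs.indicator _).tsum_sub (hβs.indicator _), ← indicator_sub]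
  simp only [← Real.norm_eq_abs]
  exact (norm_tsum_le_tsum_norm hs').trans (hs'.tsum_le_tsum hle hs)

lemma exists_empMeasure_eq_discreteMeasure {d N : ℕ} (hN : 0 < N) (y : ℕ → Fin d → ℝ)
    (s : Finset ℕ) (n : ℕ → ℕ) (hn : ∀ i ∉ s, n i = 0) (hsum : ∑ i ∈ s, n i = N) :
    ∃ k : Fin N → ℕ, empMeasure d N (y ∘ k) = discreteMeasure d (fun i => (n i : ℝ) / N) y := by
  obtain ⟨k, hk⟩ := exists_fin_map_sum_eq_sum_nsmul (M := Measure (Fin d → ℝ)) s n hsum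
  refine ⟨k, ?_⟩
  have hweight : ∀ i, ENNReal.ofReal ((n i : ℝ) / N) = (N : ℝ≥0∞)⁻¹ * n i := by
    intro i
    rw [ENNReal.ofReal_div_of_pos (by exact_mod_cast hN), ENNReal.ofReal_natCast,
      ENNReal.ofReal_natCast, div_eq_mul_inv, mul_comm]
  ext A hA
  rw [empMeasure, discreteMeasure, Measure.sum_apply _ hA, Measure.smul_apply,
    Function.comp_def, hk fun i => Measure.dirac (y i), Measure.finsetSum_apply,
    tsum_eq_sum (s := s) fun i hi => by simp [hn i hi], smul_eq_mul, Finset.mul_sum]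
  simp [hweight, mul_assoc]

lemma tsum_abs_sub_eq_two_mul_tsum_succ {α β : ℕ → ℝ} (hα : Summable α) (hβ : Summable β)
    (hsum : ∑' i, α i = ∑' i, β i) (hle : ∀ i, β (i + 1) ≤ α (i + 1)) :
    ∑' i, |α i - β i| = 2 * ∑' i, (α (i + 1) - β (i + 1)) := by
  have hsucc : ∑' i, (α (i + 1) - β (i + 1)) = β 0 - α 0 := by
    rw [((summable_nat_add_iff 1).mpr hα).tsum_sub ((summable_nat_add_iff 1).mpr hβ)]
    linarith [hα.tsum_eq_zero_add, hβ.tsum_eq_zero_add]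
  have habs : ∀ i, |α (i + 1) - β (i + 1)| = α (i + 1) - β (i + 1) :=
    fun i => abs_of_nonneg (sub_nonneg.mpr (hle i))
  have hα0 : α 0 ≤ β 0 := sub_nonneg.mp (hsucc ▸ tsum_nonneg fun i => sub_nonneg.mpr (hle i))
  rw [(hα.sub hβ).abs.tsum_eq_zero_add, tsum_congr habs, hsucc, abs_of_nonpos (by linarith)]
  ring

lemma exists_counts_eq_floor {α : ℕ → ℝ} (hα : ∀ i, 0 ≤ α i) (hsum : HasSum α 1) (N K : ℕ) :
    ∃ n : ℕ → ℕ, (∀ i ∉ Finset.range (K + 1), n i = 0) ∧ ∑ i ∈ Finset.range (K + 1), n i = N ∧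
      ∀ i < K, n (i + 1) = ⌊(N : ℝ) * α (i + 1)⌋₊ := by
  set S : ℕ := ∑ i ∈ Finset.range K, ⌊(N : ℝ) * α (i + 1)⌋₊
  have hS : S ≤ N := by
    have hα_head : ∑ i ∈ Finset.range (K + 1), α i ≤ 1 := sum_le_hasSum _ (fun i _ => hα i) hsum
    rw [Finset.sum_range_succ'] at hα_head
    suffices (S : ℝ) ≤ N by exact_mod_cast this
    calc (S : ℝ) ≤ ∑ i ∈ Finset.range K, (N : ℝ) * α (i + 1) := by
          push_cast [S]
          exact Finset.sum_le_sum fun i _ => Nat.floor_le (by have := hα (i + 1); positivity)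
      _ ≤ N := by rw [← Finset.mul_sum]; nlinarith [hα 0]
  let n : ℕ → ℕ := fun i => if i = 0 then N - S else if i ≤ K then ⌊(N : ℝ) * α i⌋₊ else 0
  have hn_floor : ∀ i < K, n (i + 1) = ⌊(N : ℝ) * α (i + 1)⌋₊ := fun i hi => by
    simp [n, Nat.succ_le_of_lt hi]
  refine ⟨n, fun i hi => ?_, ?_, hn_floor⟩
  · rw [Finset.mem_range] at hi
    simp only [n, if_neg (show i ≠ 0 by omega), if_neg (show ¬ i ≤ K by omega)]
  · rw [Finset.sum_range_succ',
      Finset.sum_congr rfl fun i hi => hn_floor i (Finset.mem_range.mp hi)]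
    simp only [n, if_pos rfl]
    omega

lemma tsum_abs_sub_div_le_of_eq_floor {α : ℕ → ℝ} (hα : ∀ i, 0 ≤ α i) (hsum : HasSum α 1)
    {N K : ℕ} (hN : 0 < N) {n : ℕ → ℕ} (hn_supp : ∀ i ∉ Finset.range (K + 1), n i = 0)
    (hn_sum : ∑ i ∈ Finset.range (K + 1), n i = N)
    (hn_floor : ∀ i < K, n (i + 1) = ⌊(N : ℝ) * α (i + 1)⌋₊) :
    ∑' i, |α i - n i / N| ≤ 2 * (K / N + ∑' i, α (i + (K + 1))) := by
  have hNpos : (0 : ℝ) < N := by exact_mod_cast hN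
  set β : ℕ → ℝ := fun i => n i / N
  have hβ_summable : Summable β :=
    summable_of_ne_finset_zero (s := Finset.range (K + 1)) fun i hi => by simp [β, hn_supp i hi]
  have hβ_sum : ∑' i, β i = 1 := by
    rw [tsum_eq_sum fun i hi => by simp [β, hn_supp i hi], ← Finset.sum_div, ← Nat.cast_sum,
      hn_sum, div_self hNpos.ne']
  have hβ_head : ∀ i < K, β (i + 1) ≤ α (i + 1) ∧ α (i + 1) - β (i + 1) ≤ 1 / N := by
    intro i hi
    simp only [β, hn_floor i hi]
    constructor
    · rw [div_le_iff₀' hNpos]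
      exact Nat.floor_le (by have := hα (i + 1); positivity)
    · rw [sub_le_iff_le_add, ← add_div, le_div_iff₀' hNpos]
      linarith [Nat.lt_floor_add_one ((N : ℝ) * α (i + 1))]
  have hβ_tail : ∀ i, K ≤ i → β (i + 1) = 0 := fun i hi => by
    simp [β, hn_supp (i + 1) (by simp; omega)]
  have hle : ∀ i, β (i + 1) ≤ α (i + 1) := fun i => by
    rcases lt_or_ge i K with hi | hi
    · exact (hβ_head i hi).1
    · exact (hβ_tail i hi).symm ▸ hα _
  rw [tsum_abs_sub_eq_two_mul_tsum_succ hsum.summable hβ_summable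
    (hsum.tsum_eq.trans hβ_sum.symm) hle,
    ← ((summable_nat_add_iff 1).mpr (hsum.summable.sub hβ_summable)).sum_add_tsum_nat_add K]
  have hhead : ∑ i ∈ Finset.range K, (α (i + 1) - β (i + 1)) ≤ K / N :=
    calc ∑ i ∈ Finset.range K, (α (i + 1) - β (i + 1))
        ≤ ∑ i ∈ Finset.range K, (1 / N : ℝ) :=
          Finset.sum_le_sum fun i hi => (hβ_head i (Finset.mem_range.mp hi)).2
      _ = K / N := by simp [div_eq_mul_inv]
  have htail : ∀ i, α (i + K + 1) - β (i + K + 1) = α (i + (K + 1)) := fun i => by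
    rw [hβ_tail _ (by omega), sub_zero, add_assoc]
  simp only [htail]
  linarith

lemma tsum_nat_add_le_of_le_mul {α r : ℕ → ℝ} {c : ℝ} (hα : ∀ i, 0 ≤ α i) (hr : Summable r)
    (hle : ∀ k, α k ≤ r k * c) (m : ℕ) : ∑' i, α (i + m) ≤ (∑' i, r (m + i)) * c := by
  have hle' : ∀ i, α (i + m) ≤ r (m + i) * c := fun i => add_comm i m ▸ hle _
  have hs : Summable fun i => r (m + i) * c := by
    simpa only [add_comm m] using ((summable_nat_add_iff m).mpr hr).mul_right c
  rw [← tsum_mul_right]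
  exact (hs.of_nonneg_of_le (fun i => hα _) hle').tsum_le_tsum hle' hs


lemma exists_totalVar_empMeasure_le {d N : ℕ} {α : ℕ → ℝ} (hα : ∀ i, 0 ≤ α i)
    (hsum : HasSum α 1) (hN : 0 < N) (y : ℕ → Fin d → ℝ) (K : ℕ) :
    ∃ k : Fin N → ℕ, totalVar (discreteMeasure d α y) (empMeasure d N (y ∘ k)) ≤
      2 * (K / N + ∑' i, α (i + (K + 1))) := by
  obtain ⟨n, hn_supp, hn_sum, hn_floor⟩ := exists_counts_eq_floor hα hsum N K
  obtain ⟨k, hk⟩ := exists_empMeasure_eq_discreteMeasure hN y _ n hn_supp hn_sum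
  have hn_summable : Summable fun i => (n i : ℝ) / N :=
    summable_of_ne_finset_zero (s := Finset.range (K + 1)) fun i hi => by simp [hn_supp i hi]
  refine ⟨k, ?_⟩
  rw [hk]
  exact (totalVar_discreteMeasure_le_tsum_abs_sub hα (fun i => by positivity) hsum.summable
    hn_summable y).trans (tsum_abs_sub_div_le_of_eq_floor hα hsum hN hn_supp hn_sum hn_floor)

lemma pos_apply_zero_of_le_mul_apply_zero {α r : ℕ → ℝ} (hα : ∀ i, 0 ≤ α i)
    (hsum : ∑' i, α i = 1) (hdecay : ∀ k, α k ≤ r k * α 0) : 0 < α 0 := by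
  refine (hα 0).lt_of_ne fun h0 => ?_
  have : ∀ k, α k = 0 := fun k => le_antisymm (by simpa [← h0] using hdecay k) (hα k)
  simp [this] at hsum

/-- Here the sequence `r` and the weights `α` are indexed from `0`, so that `r 0, α 0`
play the roles of `r_1, α_1` in the paper; the tail `∑_{k=M}^∞ r_k` (paper indexing)
is `∑' i, r (M - 1 + i)`. -/
theorem stmt4_general (r : ℕ → ℝ) (hrsum : Summable r)
    (c₀ : ℝ)
    (htailbound : ∀ M : ℕ, 2 ≤ M → (∑' i : ℕ, r (M - 1 + i)) ≤ c₀ / M)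
    (d : ℕ)
    (α : ℕ → ℝ) (y : ℕ → (Fin d → ℝ))
    (hα : ∀ i, 0 ≤ α i) (hsum : (∑' i, α i) = 1)
    (hy : ∀ i, y i ∈ Icc (0 : Fin d → ℝ) 1)
    (hdecay : ∀ k : ℕ, α k ≤ r k * α 0)
    (g : ℝ → ℝ)
    (hganti : StrictAntiOn g (Ici 1))
    (hgtail : ∀ M : ℕ, 2 ≤ M → (∑' i : ℕ, r (M - 1 + i)) ≤ g M)
    (N : ℕ) (hN : 2 ≤ N)
    (t : ℝ) (ht : t ∈ Ici (1 : ℝ)) (hgt : g t = 1 / (N * α 0)) :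
    ∃ x : Fin N → (Fin d → ℝ),
      (∀ i, x i ∈ Icc (0 : Fin d → ℝ) 1) ∧
      totalVar (discreteMeasure d α y) (empMeasure d N x) < (6 * c₀ + 3) * t / N := by
  have hα_hasSum : HasSum α 1 := hsum ▸ (Summable.of_tsum_ne_zero (by simp [hsum])).hasSum
  have hα0 : 0 < α 0 := pos_apply_zero_of_le_mul_apply_zero hα hsum hdecay
  have hc₀ : 0 ≤ c₀ := by
    have hr : ∀ k, 0 ≤ r k := fun k => nonneg_of_mul_nonneg_left ((hα k).trans (hdecay k)) hα0
    have := (tsum_nonneg fun i => hr _).trans (htailbound 2 le_rfl)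
    norm_num at this
    linarith
  have ht1 : (1 : ℝ) ≤ t := ht
  obtain ⟨K, hKt, htK⟩ : ∃ K : ℕ, (K : ℝ) + 1 ≤ t ∧ t ≤ K + 2 :=
    ⟨⌊t - 1⌋₊, by linarith [Nat.floor_le (sub_nonneg.mpr ht1)],
      by linarith [Nat.lt_floor_add_one (t - 1)]⟩
  have htail : ∑' i, α (i + (K + 1)) ≤ 1 / N :=
    calc ∑' i, α (i + (K + 1)) ≤ (∑' i, r (K + 1 + i)) * α 0 :=
          tsum_nat_add_le_of_le_mul hα hrsum hdecay _
      _ ≤ g t * α 0 := by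
          have := hgtail (K + 2) (by omega)
          push_cast at this
          gcongr
          exact this.trans (hganti.antitoneOn ht (by simp only [mem_Ici]; linarith) htK)
      _ = 1 / N := by rw [hgt]; field_simp
  obtain ⟨k, hk⟩ := exists_totalVar_empMeasure_le hα hα_hasSum (by omega : 0 < N) y K
  refine ⟨y ∘ k, fun j => hy (k j), hk.trans_lt ?_⟩
  calc 2 * (K / N + ∑' i, α (i + (K + 1))) ≤ 2 * (K / N + 1 / N) := by gcongr
    _ = 2 * (K + 1) / N := by ring
    _ ≤ 2 * t / N := by gcongr
    _ < (6 * c₀ + 3) * t / N := by gcongr; linarith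

/-- Here the sequence `r` and the weights `α` are indexed from `0`, so that `r 0, α 0`
play the roles of `r_1, α_1` in the paper; the tail `∑_{k=M}^∞ r_k` (paper indexing)
is `∑' i, r (M - 1 + i)`.

Let `(r_k)` satisfy `r_1 = 1`, `∑ r_k < ∞`, `r_i = 0 ⟹ r_j = 0 (j ≥ i)`, and
`∑_{k=M}^∞ r_k ≤ c₀/M` for integers `M ≥ 2`. Let `μ = ∑ α_i δ_{y_i}` be a discrete
probability measure on `[0,1]^d` with `α_k ≤ r_k α_1`. Let `g : [1,∞) → [0,∞)` be a
continuous strictly decreasing gauge with `∑_{i=M}^∞ r_i ≤ g(M)` for integers `M ≥ 2`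
and `g(s) ≤ c₀/s` on `[1,∞)`. Then for every `N ≥ 2` and every `t ∈ [1,∞)` with
`g(t) = 1/(N α_1)` there are points `x_1,…,x_N ∈ [0,1]^d` with
`ρ(μ; ν_N) < (6c₀+3) t / N`. -/
theorem stmt4 (r : ℕ → ℝ) (hr1 : r 0 = 1) (hrsum : Summable r)
    (hrzero : ∀ i j : ℕ, r i = 0 → i ≤ j → r j = 0)
    (c₀ : ℝ)
    (htailbound : ∀ M : ℕ, 2 ≤ M → (∑' i : ℕ, r (M - 1 + i)) ≤ c₀ / M)
    (d : ℕ) (hd : 1 ≤ d)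
    (α : ℕ → ℝ) (y : ℕ → (Fin d → ℝ))
    (hα : ∀ i, 0 ≤ α i) (hsum : (∑' i, α i) = 1)
    (hy : ∀ i, y i ∈ Icc (0 : Fin d → ℝ) 1)
    (hdecay : ∀ k : ℕ, α k ≤ r k * α 0)
    (g : ℝ → ℝ)
    (hgcont : ContinuousOn g (Ici 1))
    (hganti : StrictAntiOn g (Ici 1))
    (hgnonneg : ∀ s ∈ Ici (1 : ℝ), 0 ≤ g s)
    (hgtail : ∀ M : ℕ, 2 ≤ M → (∑' i : ℕ, r (M - 1 + i)) ≤ g M)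
    (hgsmall : ∀ s ∈ Ici (1 : ℝ), g s ≤ c₀ / s)
    (N : ℕ) (hN : 2 ≤ N)
    (t : ℝ) (ht : t ∈ Ici (1 : ℝ)) (hgt : g t = 1 / (N * α 0)) :
    ∃ x : Fin N → (Fin d → ℝ),
      (∀ i, x i ∈ Icc (0 : Fin d → ℝ) 1) ∧
      totalVar (discreteMeasure d α y) (empMeasure d N x) < (6 * c₀ + 3) * t / N :=
  stmt4_general r hrsum c₀ htailbound d α y hα hsum hy hdecay g hganti hgtail N hN t ht hgt
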